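/- Let K be a field and A an algebra over K (a K-vector space with a bilinear product, no identities assumed). Suppose A = ⊕_{j∈J} I_j is a direct sum of ideals I_j, each of which is simple as an algebra. For each j ∈ J fix a linear basis B_j of the subspace I_j, and let B be the (disjoint) union of the B_j, which is a linear basis of A. Then B is a semi-division basis of A. -/

import Mathlib

/-!  Nonassociative algebras as vector spaces with a bilinear product. -/

variable {K V : Type*} [Field K] [AddCommGroup V] [Module K V]

/-- `I` is a (two-sided) ideal of the algebra `(V, mul)`. -/
def IsIdeal (mul : V →ₗ[K] V →ₗ[K] V) (I : Submodule K V) : Prop :=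
  ∀ a : V, ∀ x ∈ I, mul a x ∈ I ∧ mul x a ∈ I

/-- The ideal of `(V, mul)` generated by an element `c`. -/
def idealGen (mul : V →ₗ[K] V →ₗ[K] V) (c : V) : Submodule K V :=
  sInf {I : Submodule K V | IsIdeal mul I ∧ c ∈ I}

/-- The annihilator `{x : x·A = A·x = 0}` of `(V, mul)` is zero. -/
def HasZeroAnn (mul : V →ₗ[K] V →ₗ[K] V) : Prop :=
  ∀ x : V, (∀ a : V, mul x a = 0 ∧ mul a x = 0) → x = 0

/-- `(V, mul)` is a simple algebra: nonzero product, only trivial ideals. -/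
def IsSimpleAlgebra (mul : V →ₗ[K] V →ₗ[K] V) : Prop :=
  mul ≠ 0 ∧ ∀ I : Submodule K V, IsIdeal mul I → I = ⊥ ∨ I = ⊤

/-- `I` is an ideal of `(V, mul)` which is simple as an algebra (with the
restricted product): nonzero product, and its only ideals are `0` and `I`. -/
def IsSimpleIdeal (mul : V →ₗ[K] V →ₗ[K] V) (I : Submodule K V) : Prop :=
  IsIdeal mul I ∧ (∃ x ∈ I, ∃ y ∈ I, mul x y ≠ 0) ∧
    ∀ J : Submodule K V, J ≤ I →
      (∀ a ∈ I, ∀ x ∈ J, mul a x ∈ J ∧ mul x a ∈ J) → J = ⊥ ∨ J = I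

/-- `(V, mul)` is semisimple: it is the direct sum of a family of ideals,
each of which is simple as an algebra. -/
def IsSemisimple (mul : V →ₗ[K] V →ₗ[K] V) : Prop :=
  ∃ 𝒮 : Set (Submodule K V), (∀ I ∈ 𝒮, IsSimpleIdeal mul I) ∧
    sSupIndep 𝒮 ∧ sSup 𝒮 = ⊤

variable {ι : Type*}

/-- The set `S_{e_i}` attached to a basis element `e_i = b i`. -/
def Sset (mul : V →ₗ[K] V →ₗ[K] V) (b : Module.Basis ι K V) (i : ι) : Set V :=
  {v | ∃ j : ι, v = b j ∧ (mul (b i) (b j) ≠ 0 ∨ mul (b j) (b i) ≠ 0)}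

/-- `B` is an i-division basis. -/
def IsIDivisionBasis (mul : V →ₗ[K] V →ₗ[K] V) (b : Module.Basis ι K V) : Prop :=
  ∀ (i : ι) (x : V),
    (mul (b i) x ≠ 0 →
      b i ∈ idealGen mul (mul (b i) x) ∧ x ∈ idealGen mul (mul (b i) x)) ∧
    (mul x (b i) ≠ 0 →
      b i ∈ idealGen mul (mul x (b i)) ∧ x ∈ idealGen mul (mul x (b i)))

/-- `B` is a weak-division basis: the i-division condition is only required
for `x` in `M_{e_i}`, the span of `S_{e_i}`. -/
def IsWeakDivisionBasis (mul : V →ₗ[K] V →ₗ[K] V) (b : Module.Basis ι K V) : Prop :=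
  ∀ i : ι, ∀ x ∈ Submodule.span K (Sset mul b i),
    (mul (b i) x ≠ 0 →
      b i ∈ idealGen mul (mul (b i) x) ∧ x ∈ idealGen mul (mul (b i) x)) ∧
    (mul x (b i) ≠ 0 →
      b i ∈ idealGen mul (mul x (b i)) ∧ x ∈ idealGen mul (mul x (b i)))

/-- The set `P_{e_i}` attached to a basis element `e_i = b i`, where
`b.coord i` is the coordinate functional `p_{e_i}`. -/
def Pset (mul : V →ₗ[K] V →ₗ[K] V) (b : Module.Basis ι K V) (i : ι) : Set V :=
  {v | ∃ j : ι, v = b j ∧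
    ((∃ r : ι, b.coord i (mul (b j) (b r)) ≠ 0) ∨
     (∃ s : ι, b.coord i (mul (b s) (b j)) ≠ 0))}

/-- The set `P_{e_i}·P_{e_i}` of products of pairs of elements of `P_{e_i}`. -/
def PPset (mul : V →ₗ[K] V →ₗ[K] V) (b : Module.Basis ι K V) (i : ι) : Set V :=
  {v | ∃ x ∈ Pset mul b i, ∃ y ∈ Pset mul b i, v = mul x y}

/-- `B` is a semi-division basis. -/
def IsSemiDivisionBasis (mul : V →ₗ[K] V →ₗ[K] V) (b : Module.Basis ι K V) : Prop :=
  IsWeakDivisionBasis mul b ∧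
  ∀ i : ι, ∀ x ∈ PPset mul b i, ∀ e ∈ Sset mul b i,
    (mul x e ≠ 0 →
      e ∈ idealGen mul (mul x e) ∧ x ∈ idealGen mul (mul x e)) ∧
    (mul e x ≠ 0 →
      e ∈ idealGen mul (mul e x) ∧ x ∈ idealGen mul (mul e x))

/-!
Every basis vector lies in one of the summands, and products of elements of distinct summands
vanish. Hence the basis vectors `e_j` with `e_i e_j ≠ 0` or `e_j e_i ≠ 0` lie in the summand
`I` of `e_i`; and the basis vectors occurring with nonzero coefficient in a product of two basis
vectors lie in the summand of those factors, so `P_{e_i}` and `P_{e_i} P_{e_i}` lie in `I` as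
well. Finally, if `0 ≠ c = x y` with `x, y ∈ I`, then `I(c) ∩ I` is a nonzero ideal of the
simple algebra `I`, so `I ⊆ I(c)` and both factors lie in `I(c)`.
-/

section IdealGen

variable (mul : V →ₗ[K] V →ₗ[K] V)

lemma isIdeal_idealGen (c : V) : IsIdeal mul (idealGen mul c) := by
  intro a x hx
  simp only [idealGen, Submodule.mem_sInf] at hx ⊢
  exact ⟨fun p hp => (hp.1 a x (hx p hp)).1, fun p hp => (hp.1 a x (hx p hp)).2⟩

lemma mem_idealGen_self (c : V) : c ∈ idealGen mul c :=
  Submodule.mem_sInf.mpr fun _ hp => hp.2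

variable {mul}

lemma IsSimpleIdeal.le_idealGen {I : Submodule K V} (hI : IsSimpleIdeal mul I)
    {c : V} (hc : c ∈ I) (hc0 : c ≠ 0) : I ≤ idealGen mul c := by
  have hideal : ∀ a ∈ I, ∀ x ∈ idealGen mul c ⊓ I,
      mul a x ∈ idealGen mul c ⊓ I ∧ mul x a ∈ idealGen mul c ⊓ I := by
    rintro a - x ⟨hxc, hxI⟩
    exact ⟨⟨(isIdeal_idealGen mul c a x hxc).1, (hI.1 a x hxI).1⟩,
      ⟨(isIdeal_idealGen mul c a x hxc).2, (hI.1 a x hxI).2⟩⟩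
  have hcmem : c ∈ idealGen mul c ⊓ I := ⟨mem_idealGen_self mul c, hc⟩
  rcases hI.2.2 _ inf_le_right hideal with hbot | htop
  · exact absurd (by simpa [hbot] using hcmem) hc0
  · exact htop ▸ inf_le_left

lemma IsSimpleIdeal.mem_idealGen_mul {I : Submodule K V} (hI : IsSimpleIdeal mul I)
    {x y : V} (hx : x ∈ I) (hy : y ∈ I) (hxy : mul x y ≠ 0) :
    x ∈ idealGen mul (mul x y) ∧ y ∈ idealGen mul (mul x y) :=
  have hle := hI.le_idealGen (hI.1 x y hy).1 hxy
  ⟨hle hx, hle hy⟩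

end IdealGen

section DirectSum

variable {J : Type*} {I : J → Submodule K V}

lemma Module.Basis.mem_of_repr_ne_zero_of_iSupIndep (hind : iSupIndep I)
    (b : Module.Basis ι K V) (hb : ∀ i, ∃ j, b i ∈ I j) {m : J} {v : V} (hv : v ∈ I m)
    {i : ι} (hi : b.repr v i ≠ 0) : b i ∈ I m := by
  set S : Set ι := {k | b k ∈ I m}
  have hS : Submodule.span K (b '' S) ≤ I m :=
    Submodule.span_le.mpr <| Set.image_subset_iff.mpr fun _ hk => hk
  have hSc : Submodule.span K (b '' Sᶜ) ≤ ⨆ (j) (_ : j ≠ m), I j := by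
    refine Submodule.span_le.mpr <| Set.image_subset_iff.mpr fun k hk => ?_
    obtain ⟨j, hj⟩ := hb k
    exact le_iSup₂ (f := fun j (_ : j ≠ m) => I j) j (fun h => hk (show b k ∈ I m from h ▸ hj)) hj
  have hsplit : v ∈ Submodule.span K (b '' S) ⊔ Submodule.span K (b '' Sᶜ) := by
    rw [← Submodule.span_union, ← Set.image_union, Set.union_compl_self, Set.image_univ,
      b.span_eq]
    exact Submodule.mem_top
  obtain ⟨w, hw, w', hw', rfl⟩ := Submodule.mem_sup.mp hsplit
  have hw'0 : w' = 0 :=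
    Submodule.disjoint_def.mp (hind m) w' (by simpa using sub_mem hv (hS hw)) (hSc hw')
  subst hw'0
  exact b.repr_support_subset_of_mem_span S (by simpa using hw) (Finsupp.mem_support_iff.mpr hi)

variable (mul : V →ₗ[K] V →ₗ[K] V)

lemma mul_eq_zero_of_mem_of_ne (hind : iSupIndep I) (hid : ∀ j, IsIdeal mul (I j))
    {j j' : J} (hjj' : j ≠ j') {x y : V} (hx : x ∈ I j) (hy : y ∈ I j') : mul x y = 0 :=
  Submodule.disjoint_def.mp (hind.pairwiseDisjoint hjj') _ (hid j y x hx).2 (hid j' x y hy).1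

variable (b : Module.Basis ι K V)

lemma Sset_subset (hind : iSupIndep I) (hid : ∀ j, IsIdeal mul (I j))
    (hb : ∀ i, ∃ j, b i ∈ I j) {i : ι} {j : J} (hi : b i ∈ I j) :
    Sset mul b i ⊆ I j := by
  rintro - ⟨k, rfl, hk⟩
  obtain ⟨j', hj'⟩ := hb k
  by_contra hkj
  have hjj' : j ≠ j' := fun h => hkj (h ▸ hj')
  rcases hk with hk | hk
  · exact hk (mul_eq_zero_of_mem_of_ne mul hind hid hjj' hi hj')
  · exact hk (mul_eq_zero_of_mem_of_ne mul hind hid hjj'.symm hj' hi)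

lemma Pset_subset (hind : iSupIndep I) (hid : ∀ j, IsIdeal mul (I j))
    (hb : ∀ i, ∃ j, b i ∈ I j) {i : ι} {j : J} (hi : b i ∈ I j) :
    Pset mul b i ⊆ I j := by
  rintro - ⟨k, rfl, hk⟩
  obtain ⟨j', hj'⟩ := hb k
  have hij' : b i ∈ I j' := by
    rcases hk with ⟨r, hr⟩ | ⟨s, hs⟩
    · exact b.mem_of_repr_ne_zero_of_iSupIndep hind hb (hid j' (b r) (b k) hj').2 hr
    · exact b.mem_of_repr_ne_zero_of_iSupIndep hind hb (hid j' (b s) (b k) hj').1 hs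
  by_contra hkj
  have hjj' : j ≠ j' := fun h => hkj (h ▸ hj')
  exact b.ne_zero i (Submodule.disjoint_def.mp (hind.pairwiseDisjoint hjj') _ hi hij')

lemma PPset_subset (hind : iSupIndep I) (hid : ∀ j, IsIdeal mul (I j))
    (hb : ∀ i, ∃ j, b i ∈ I j) {i : ι} {j : J} (hi : b i ∈ I j) :
    PPset mul b i ⊆ I j := by
  rintro - ⟨x, hx, y, -, rfl⟩
  exact (hid j y x (Pset_subset mul b hind hid hb hi hx)).2

end DirectSum

theorem semiDivisionBasis_of_directSum_of_simpleIdeals_general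
    (mul : V →ₗ[K] V →ₗ[K] V) {J : Type*} (I : J → Submodule K V)
    (hind : iSupIndep I)
    (hsimple : ∀ j : J, IsSimpleIdeal mul (I j))
    (b : Module.Basis ι K V) (hb : ∀ i : ι, ∃ j : J, b i ∈ I j) :
    IsSemiDivisionBasis mul b := by
  have hid : ∀ j, IsIdeal mul (I j) := fun j => (hsimple j).1
  refine ⟨fun i x hx => ?_, fun i x hx e he => ?_⟩
  · obtain ⟨j, hi⟩ := hb i
    have hxI : x ∈ I j := Submodule.span_le.mpr (Sset_subset mul b hind hid hb hi) hx
    exact ⟨(hsimple j).mem_idealGen_mul hi hxI,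
      fun h => ((hsimple j).mem_idealGen_mul hxI hi h).symm⟩
  · obtain ⟨j, hi⟩ := hb i
    have hxI : x ∈ I j := PPset_subset mul b hind hid hb hi hx
    have heI : e ∈ I j := Sset_subset mul b hind hid hb hi he
    exact ⟨fun h => ((hsimple j).mem_idealGen_mul hxI heI h).symm,
      (hsimple j).mem_idealGen_mul heI hxI⟩

/-- If `A` is the internal direct sum of a family of ideals, each simple as an
algebra, then any basis of `A` obtained as the union of bases of the ideals
(equivalently, any basis each of whose elements lies in one of the ideals)
is a semi-division basis. -/
theorem semiDivisionBasis_of_directSum_of_simpleIdeals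
    (mul : V →ₗ[K] V →ₗ[K] V) {J : Type*} (I : J → Submodule K V)
    (hind : iSupIndep I) (hsup : iSup I = ⊤)
    (hsimple : ∀ j : J, IsSimpleIdeal mul (I j))
    (b : Module.Basis ι K V) (hb : ∀ i : ι, ∃ j : J, b i ∈ I j) :
    IsSemiDivisionBasis mul b :=
  semiDivisionBasis_of_directSum_of_simpleIdeals_general mul I hind hsimple b hb
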